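/- Let F' be a saturated foliation on ℙ² given by a homogeneous vector field X', let P be a homogeneous polynomial with divisor C, and let F be the (non-saturated) foliation given by X = P·X'. Then the inflection divisors satisfy I(F) = I(F') + 3C. -/

import Mathlib

/-!
`X = P·X'` acts as `P` times the derivation `X'`, so by Leibniz `X(P·A) = P·(X'(P)·A + P·X'(A))`.
Hence the second row of the inflection matrix of `X` is `P` times that of `X'`, and the third is
`P` times (a multiple of the second row of `X'` plus `P` times its third row). Removing that
multiple of the second row leaves the factor `P·P·P = P³`.
-/

open MvPolynomial

/-- Action of the homogeneous vector field `X = A∂x + B∂y + C∂z` on a polynomial. -/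
noncomputable def applyVF (A B C f : MvPolynomial (Fin 3) ℂ) : MvPolynomial (Fin 3) ℂ :=
  A * pderiv 0 f + B * pderiv 1 f + C * pderiv 2 f

/-- The defining polynomial of the inflection divisor of the foliation given by the homogeneous
vector field `X = A∂x + B∂y + C∂z`: the determinant with rows `(x,y,z)`, `(X(x),X(y),X(z))`,
`(X²(x),X²(y),X²(z))`. -/
noncomputable def inflDet (A B C : MvPolynomial (Fin 3) ℂ) : MvPolynomial (Fin 3) ℂ :=
  Matrix.det !![X 0, X 1, X 2; A, B, C;
    applyVF A B C A, applyVF A B C B, applyVF A B C C]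

theorem Matrix.det_fin_three_of_smul_rows {R : Type*} [CommRing R] (v w u : Fin 3 → R)
    (p c : R) :
    (Matrix.of ![v, p • w, p • (c • w + p • u)]).det = p ^ 3 * (Matrix.of ![v, w, u]).det := by
  simp only [Matrix.det_fin_three, Matrix.of_apply, Matrix.cons_val, Pi.smul_apply, Pi.add_apply,
    smul_eq_mul]
  ring

lemma applyVF_mul_coeffs (A B C P f : MvPolynomial (Fin 3) ℂ) :
    applyVF (P * A) (P * B) (P * C) f = P * applyVF A B C f := by
  simp only [applyVF]
  ring

lemma applyVF_mul (A B C f g : MvPolynomial (Fin 3) ℂ) :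
    applyVF A B C (f * g) = applyVF A B C f * g + f * applyVF A B C g := by
  simp only [applyVF, Derivation.leibniz, smul_eq_mul]
  ring

theorem stmt13_general (A B C P : MvPolynomial (Fin 3) ℂ) :
    inflDet (P * A) (P * B) (P * C) = P ^ 3 * inflDet A B C := by
  have hdet := Matrix.det_fin_three_of_smul_rows ![X 0, X 1, X 2] ![A, B, C]
    ![applyVF A B C A, applyVF A B C B, applyVF A B C C] P (applyVF A B C P)
  simp only [Matrix.smul_cons, Matrix.cons_add_cons, smul_eq_mul, Matrix.smul_empty,
    Matrix.empty_add_empty] at hdet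
  simp only [inflDet, applyVF_mul_coeffs]
  simpa only [applyVF_mul] using hdet

/-- Let `F'` be a saturated foliation on `ℙ²` given by a homogeneous vector
field `X' = A∂x + B∂y + C∂z` of degree `d`, let `P` be a homogeneous polynomial with divisor `C`,
and let `F` be the (non-saturated) foliation given by `X = P·X'`.  Then the inflection divisors
satisfy `I(F) = I(F') + 3C`, i.e. at the level of defining polynomials the inflection determinant
of `P·X'` equals `P³` times that of `X'`. -/
theorem stmt13 (d m : ℕ) (A B C P : MvPolynomial (Fin 3) ℂ)
    (hA : A.IsHomogeneous d) (hB : B.IsHomogeneous d) (hC : C.IsHomogeneous d)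
    (hP : P.IsHomogeneous m)
    (hsat : ∀ e : MvPolynomial (Fin 3) ℂ,
      e ∣ (X 1 * C - X 2 * B) → e ∣ (X 2 * A - X 0 * C) → e ∣ (X 0 * B - X 1 * A) → IsUnit e) :
    inflDet (P * A) (P * B) (P * C) = P ^ 3 * inflDet A B C :=
  stmt13_general A B C P
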